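/- Let f be a binary sequence whose only square factors are 00, 11 and 0101, and let g be obtained from f by replacing every occurrence of the factor 10 by 12220 (over the alphabet {0,1,2}). Then g contains no square factor XX with |X| ≥ 2. -/

import Mathlib

def IsFactor {α : Type*} (u : List α) (w : ℕ → α) : Prop :=
  ∃ i, u = (List.range u.length).map fun j => w (i + j)

/-- The block of `g` produced at position `n` of `f`: the occurrence `10` is
replaced by `12220`, i.e. `222` is inserted between a `1` and a following `0`. -/
def block (f : ℕ → Fin 2) (n : ℕ) : List (Fin 3) :=
  if f n = 1 ∧ f (n + 1) = 0 then [1, 2, 2, 2] else [(f n).castLE (by norm_num)]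

/-- Prefixes of the word `g` obtained from `f` by replacing each factor `10` by `12220`. -/
def gPrefix (f : ℕ → Fin 2) (n : ℕ) : List (Fin 3) :=
  ((List.range n).map (block f)).flatten

/-! Erasing the letter `2` from `g` gives back `f`, so a square `XX` in `g` yields the square
`ZZ` in `f`, where `Z` is `X` with its `2`s erased; hence `Z` is empty, `0`, `1` or `01`. For
`|X| ≥ 2` this forces `XX` to contain one of `10`, `21`, `02`, `120`, `1220`, `2222`, `2012`.
None of these occurs in `g`: a factor of length at most 4 of `g` lies in the blocks of four
consecutive letters of `f`, and these blocks are determined by five consecutive letters, so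
this is a finite check, in which `2012` is excluded because it would come from the square
`1010` in `f`. -/

open List

section Blocks

variable {α : Type*} (b : ℕ → List α)

def blocksPrefix (n : ℕ) : List α := ((range n).map b).flatten

lemma blocksPrefix_add (n m : ℕ) :
    blocksPrefix b (n + m) = blocksPrefix b n ++ blocksPrefix (fun k => b (n + k)) m := by
  simp [blocksPrefix, range_add, Function.comp_def]

lemma blocksPrefix_prefix_of_le {m n : ℕ} (h : m ≤ n) : blocksPrefix b m <+: blocksPrefix b n := by
  obtain ⟨k, rfl⟩ := Nat.exists_eq_add_of_le h
  rw [blocksPrefix_add]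
  exact prefix_append _ _

lemma prefix_blocksPrefix_of_length_le {v : List α} {n m : ℕ} (hv : v <+: blocksPrefix b n)
    (hlen : v.length ≤ (blocksPrefix b m).length) : v <+: blocksPrefix b m :=
  prefix_of_prefix_length_le (hv.trans (blocksPrefix_prefix_of_le b (le_max_left n m)))
    (blocksPrefix_prefix_of_le b (le_max_right n m)) hlen

variable {b}

lemma le_length_blocksPrefix (hb : ∀ k, b k ≠ []) (m : ℕ) : m ≤ (blocksPrefix b m).length := by
  induction m with
  | zero => exact Nat.zero_le _
  | succ m ih =>
    have := length_pos_of_ne_nil (hb m)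
    simp only [blocksPrefix, range_succ, map_append, flatten_append] at ih ⊢
    simp only [map_cons, map_nil, flatten_cons, flatten_nil, append_nil, length_append]
    omega

lemma exists_infix_blocksPrefix_shift (hb : ∀ k, b k ≠ []) {u : List α} {n m : ℕ}
    (hu : u <:+: blocksPrefix b n) (hm : u.length ≤ m) :
    ∃ i, u <:+: blocksPrefix (fun k => b (i + k)) m := by
  rcases eq_or_ne u [] with rfl | hne
  · exact ⟨0, nil_infix⟩
  obtain ⟨s, t, hst⟩ := hu
  have hs : s.length < (blocksPrefix b n).length := by
    rw [← hst]
    simp only [length_append]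
    have := length_pos_of_ne_nil hne
    omega
  have hex : ∃ i, s.length < (blocksPrefix b (i + 1)).length :=
    ⟨n, hs.trans_le (blocksPrefix_prefix_of_le b n.le_succ).length_le⟩
  -- `i` is the block in which `u` starts
  set i := Nat.find hex with hi
  have hstart : (blocksPrefix b i).length ≤ s.length := by
    rcases Nat.eq_zero_or_eq_succ_pred i with h0 | hsucc
    · simp [h0, blocksPrefix]
    · rw [hsucc]
      exact not_lt.mp (Nat.find_min hex (by omega))
  have hsn : s <+: blocksPrefix b n := ⟨u ++ t, by rw [← append_assoc, hst]⟩
  obtain ⟨s', hs'⟩ : blocksPrefix b i <+: s :=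
    prefix_of_prefix_length_le (blocksPrefix_prefix_of_le b (le_max_left i n))
      (hsn.trans (blocksPrefix_prefix_of_le b (le_max_right i n))) hstart
  have hlen : (blocksPrefix b (i + 1)).length + (m - 1) ≤ (blocksPrefix b (i + m)).length := by
    have h := le_length_blocksPrefix (fun k => hb (i + 1 + k)) (m - 1)
    rw [show i + m = i + 1 + (m - 1) by have := length_pos_of_ne_nil hne; omega,
      blocksPrefix_add b (i + 1), length_append]
    omega
  have hpre : s ++ u <+: blocksPrefix b (i + m) := by
    refine prefix_blocksPrefix_of_length_le b ⟨t, hst⟩ ?_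
    have := Nat.find_spec hex
    rw [← hi] at this
    simp only [length_append] at this ⊢
    omega
  rw [← hs', blocksPrefix_add, append_assoc, prefix_append_right_inj] at hpre
  exact ⟨i, (suffix_append s' u).isInfix.trans hpre.isInfix⟩

end Blocks

lemma blocksPrefix_singleton {α : Type*} (w : ℕ → α) (n : ℕ) :
    blocksPrefix (fun k => [w k]) n = (range n).map w :=
  map_eq_flatMap.symm

lemma isFactor_of_infix_blocksPrefix {α : Type*} {w : ℕ → α} {u : List α} {n : ℕ}
    (hu : u <:+: blocksPrefix (fun k => [w k]) n) : IsFactor u w := by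
  obtain ⟨i, hi⟩ := exists_infix_blocksPrefix_shift (fun _ => cons_ne_nil _ _) hu le_rfl
  rw [blocksPrefix_singleton] at hi
  exact ⟨i, hi.eq_of_length (by simp)⟩

def letterBlock (a b : Fin 2) : List (Fin 3) :=
  if a = 1 ∧ b = 0 then [1, 2, 2, 2] else [a.castLE (by norm_num)]

lemma letterBlock_ne_nil (a b : Fin 2) : letterBlock a b ≠ [] := by
  unfold letterBlock
  split <;> simp

/-- `10`, `21`, `02` are the factors `cd` with `c ≡ d + 1 (mod 3)`; the runs of `2` are
exactly the `222` of `12220`; and `2012` could only come from `1010` in `f`. -/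
def forbiddenFactors : List (List (Fin 3)) :=
  [[1, 0], [2, 1], [0, 2], [1, 2, 0], [1, 2, 2, 0], [2, 2, 2, 2], [2, 0, 1, 2]]

lemma length_le_four_of_mem_forbiddenFactors {u : List (Fin 3)} (hu : u ∈ forbiddenFactors) :
    u.length ≤ 4 := by
  revert u
  decide

lemma not_infix_letterBlocks : ∀ a b c d e : Fin 2,
    [a, b, c, d] ≠ [1, 0, 1, 0] → [b, c, d, e] ≠ [1, 0, 1, 0] → ∀ u ∈ forbiddenFactors,
      ¬ u <:+: letterBlock a b ++ letterBlock b c ++ letterBlock c d ++ letterBlock d e := by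
  decide

lemma not_infix_gPrefix_of_mem_forbiddenFactors {f : ℕ → Fin 2} (hf : ¬ IsFactor [1, 0, 1, 0] f)
    {u : List (Fin 3)} (hu : u ∈ forbiddenFactors) (n : ℕ) : ¬ u <:+: gPrefix f n := by
  intro h
  obtain ⟨i, hi⟩ := exists_infix_blocksPrefix_shift (fun k => letterBlock_ne_nil _ _) h
    (length_le_four_of_mem_forbiddenFactors hu)
  have hf' (j : ℕ) : [f j, f (j + 1), f (j + 2), f (j + 3)] ≠ [1, 0, 1, 0] :=
    fun hj => hf ⟨j, hj.symm⟩
  exact not_infix_letterBlocks _ _ _ _ (f (i + 4)) (hf' i) (hf' (i + 1)) u hu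
    (by simpa [blocksPrefix, range_succ, add_assoc] using hi)

def bitOf : Fin 3 → Option (Fin 2) := ![some 0, some 1, none]

lemma bitOf_eq_none_iff {a : Fin 3} : bitOf a = none ↔ a = 2 := by
  revert a
  decide

lemma bitOf_eq_some_iff {a : Fin 3} {c : Fin 2} : bitOf a = some c ↔ a = c.castSucc := by
  revert a c
  decide

lemma filterMap_bitOf_letterBlock (a b : Fin 2) : (letterBlock a b).filterMap bitOf = [a] := by
  revert a b
  decide

lemma filterMap_bitOf_gPrefix (f : ℕ → Fin 2) (n : ℕ) :
    (gPrefix f n).filterMap bitOf = blocksPrefix (fun k => [f k]) n := by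
  simp only [gPrefix, blocksPrefix, filterMap_flatten, map_map]
  congr 2
  funext k
  exact filterMap_bitOf_letterBlock _ _

lemma eq_replicate_of_filterMap_bitOf_eq_nil {X : List (Fin 3)} (h : X.filterMap bitOf = []) :
    X = replicate X.length 2 :=
  eq_replicate_iff.2 ⟨rfl, fun a ha => bitOf_eq_none_iff.1 (filterMap_eq_nil_iff.1 h a ha)⟩

lemma exists_eq_replicate_append_of_filterMap_bitOf_eq_cons {X : List (Fin 3)} {c : Fin 2}
    {cs : List (Fin 2)} (h : X.filterMap bitOf = c :: cs) :
    ∃ p Y, X = replicate p 2 ++ c.castSucc :: Y ∧ Y.filterMap bitOf = cs := by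
  obtain ⟨l, a, Y, rfl, hl, ha, hY⟩ := filterMap_eq_cons_iff.1 h
  refine ⟨l.length, Y, ?_, hY⟩
  rw [← eq_replicate_of_filterMap_bitOf_eq_nil (filterMap_eq_nil_iff.2 hl), bitOf_eq_some_iff.1 ha]

lemma exists_eq_replicate_append_of_filterMap_bitOf_eq_singleton {X : List (Fin 3)} {c : Fin 2}
    (h : X.filterMap bitOf = [c]) :
    ∃ p q, X = replicate p 2 ++ [c.castSucc] ++ replicate q 2 := by
  obtain ⟨p, Y, rfl, hY⟩ := exists_eq_replicate_append_of_filterMap_bitOf_eq_cons h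
  exact ⟨p, Y.length, by rw [← eq_replicate_of_filterMap_bitOf_eq_nil hY, append_assoc]; rfl⟩

lemma append_self_of_eq_replicate_append {α : Type*} {X C : List α} {a : α} {p q : ℕ}
    (h : X = replicate p a ++ C ++ replicate q a) :
    X ++ X = (replicate p a ++ C) ++ replicate (q + p) a ++ (C ++ replicate q a) := by
  subst h
  simp only [append_assoc, replicate_add]

lemma exists_forbidden_infix_append_self {X : List (Fin 3)} (hX : 2 ≤ X.length)
    (hZ : X.filterMap bitOf ∈ [[], [0], [1], [0, 1]]) :
    ∃ u ∈ forbiddenFactors, u <:+: X ++ X := by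
  simp only [mem_cons, not_mem_nil, or_false] at hZ
  rcases hZ with h | h | h | h
  · refine ⟨[2, 2, 2, 2], by decide, ?_⟩
    rw [eq_replicate_of_filterMap_bitOf_eq_nil h, ← replicate_add]
    exact infix_replicate_iff.2 ⟨by simp; omega, rfl⟩
  · obtain ⟨p, q, hpq⟩ := exists_eq_replicate_append_of_filterMap_bitOf_eq_singleton h
    obtain ⟨r, hr⟩ : ∃ r, q + p = r + 1 := ⟨q + p - 1, by simp [hpq] at hX; omega⟩
    refine ⟨[0, 2], by decide, ?_⟩
    rw [append_self_of_eq_replicate_append hpq, hr]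
    exact ⟨replicate p 2, replicate r 2 ++ [0] ++ replicate q 2, by simp [replicate_succ]⟩
  · obtain ⟨p, q, hpq⟩ := exists_eq_replicate_append_of_filterMap_bitOf_eq_singleton h
    obtain ⟨r, hr⟩ : ∃ r, q + p = r + 1 := ⟨q + p - 1, by simp [hpq] at hX; omega⟩
    refine ⟨[2, 1], by decide, ?_⟩
    rw [append_self_of_eq_replicate_append hpq, hr]
    exact ⟨replicate p 2 ++ [1] ++ replicate r 2, replicate q 2, by simp [replicate_succ']⟩
  · obtain ⟨p, Y, rfl, hY⟩ := exists_eq_replicate_append_of_filterMap_bitOf_eq_cons h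
    obtain ⟨m, q, rfl⟩ := exists_eq_replicate_append_of_filterMap_bitOf_eq_singleton hY
    rcases m with _ | m
    · rw [append_self_of_eq_replicate_append (p := p) (q := q) (a := 2) (C := [0, 1]) (by simp)]
      by_cases hr : 4 ≤ q + p
      · exact ⟨[2, 2, 2, 2], by decide, (infix_replicate_iff.2 ⟨hr, rfl⟩).trans (infix_append _ _ _)⟩
      · have hp : p ≤ 3 := by omega
        have hq : q ≤ 3 := by omega
        interval_cases p <;> interval_cases q <;> decide
    · refine ⟨[0, 2], by decide, IsInfix.trans ?_ (prefix_append _ _).isInfix⟩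
      exact ⟨replicate p 2, replicate m 2 ++ [1] ++ replicate q 2, by simp [replicate_succ]⟩

/-- If the only square factors of the binary word `f` are `00`, `11` and `0101`,
then the word `g` obtained from `f` by replacing each `10` by `12220` contains
no square `XX` with `|X| ≥ 2`. -/
theorem stmt7 (f : ℕ → Fin 2)
    (hsq : ∀ X : List (Fin 2), X ≠ [] → IsFactor (X ++ X) f →
      X = [0] ∨ X = [1] ∨ X = [0, 1])
    (X : List (Fin 3)) (hX : 2 ≤ X.length) :
    ¬ ∃ n, (X ++ X) <:+: gPrefix f n := by
  rintro ⟨n, hXX⟩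
  have h1010 : ¬ IsFactor [1, 0, 1, 0] f := fun h => by
    rcases hsq [1, 0] (by simp) h with h | h | h <;> simp at h
  have hZ : X.filterMap bitOf ∈ [[], [0], [1], [0, 1]] := by
    by_cases hZ : X.filterMap bitOf = []
    · simp [hZ]
    have hZZ := hXX.filterMap bitOf
    rw [filterMap_append, filterMap_bitOf_gPrefix] at hZZ
    rcases hsq _ hZ (isFactor_of_infix_blocksPrefix hZZ) with h | h | h <;> simp [h]
  obtain ⟨u, hu, huXX⟩ := exists_forbidden_infix_append_self hX hZ
  exact not_infix_gPrefix_of_mem_forbiddenFactors h1010 hu n (huXX.trans hXX)
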